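/- Let φ : R → Q be an injective ring epimorphism with Tor_1^R(Q, Q) = 0, K = Q/φ(R). Then the right R-module Hom_R(K, M) is torsion-free for every right R-module M, where torsion-free is with respect to the torsion theory whose torsion modules are those T with T ⊗_R Q = 0. -/

import Mathlib

open MulOpposite

universe u

/-- `φ : R →+* Q` is an epimorphism in the category of rings. -/
def IsRingEpi {R Q : Type u} [Ring R] [Ring Q] (φ : R →+* Q) : Prop :=
  ∀ (T : Type u) [Ring T] (ψ ω : Q →+* T), ψ.comp φ = ω.comp φ → ψ = ω

section NCTensor

variable (R : Type u) [Ring R] (M : Type u) [AddCommGroup M] [Module Rᵐᵒᵖ M]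
  (N : Type u) [AddCommGroup N] [Module R N]

/-- Relations defining the tensor product `M ⊗_R N` of a right `R`-module `M`
and a left `R`-module `N` over a (possibly noncommutative) ring `R`. -/
def ncRels : AddSubgroup (FreeAbelianGroup (M × N)) :=
  AddSubgroup.closure
    ({x | ∃ m m' n, x = FreeAbelianGroup.of (m + m', n) - FreeAbelianGroup.of (m, n) -
        FreeAbelianGroup.of (m', n)} ∪
     {x | ∃ m n n', x = FreeAbelianGroup.of (m, n + n') - FreeAbelianGroup.of (m, n) -
        FreeAbelianGroup.of (m, n')} ∪
     {x | ∃ (r : R) (m : M) (n : N), x = FreeAbelianGroup.of (op r • m, n) -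
        FreeAbelianGroup.of (m, r • n)})

/-- The tensor product `M ⊗_R N` of a right `R`-module and a left `R`-module over a
(possibly noncommutative) ring `R`, as an abelian group. -/
def NCTensor : Type u := FreeAbelianGroup (M × N) ⧸ ncRels R M N

instance : AddCommGroup (NCTensor R M N) :=
  QuotientAddGroup.Quotient.addCommGroup _

/-- The pure tensor `m ⊗ n` in `M ⊗_R N`. -/
def NCTensor.tmul (m : M) (n : N) : NCTensor R M N :=
  QuotientAddGroup.mk (FreeAbelianGroup.of (m, n))

end NCTensor

/-- `Tor_1^R(X, N) = 0`, for a right `R`-module `X` and a left `R`-module `N`: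
for every presentation `0 → A → B → X → 0` of `X` with `B` projective, the induced map
`A ⊗_R N → B ⊗_R N` is injective. -/
def Tor1Zero (R : Type u) [Ring R] (X : Type u) [AddCommGroup X] [Module Rᵐᵒᵖ X]
    (N : Type u) [AddCommGroup N] [Module R N] : Prop :=
  ∀ (A B : Type u) [AddCommGroup A] [AddCommGroup B] [Module Rᵐᵒᵖ A] [Module Rᵐᵒᵖ B]
    (i : A →ₗ[Rᵐᵒᵖ] B) (p : B →ₗ[Rᵐᵒᵖ] X),
    Module.Projective Rᵐᵒᵖ B → Function.Injective i → Function.Surjective p →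
    LinearMap.range i = LinearMap.ker p →
    ∀ g : NCTensor R A N →+ NCTensor R B N,
      (∀ a n, g (NCTensor.tmul R A N a n) = NCTensor.tmul R B N (i a) n) →
      Function.Injective g

section Kmod

variable {R Q : Type u} [Ring R] [Ring Q] (φ : R →+* Q) [Module Rᵐᵒᵖ Q]
  (hr : ∀ (r : R) (q : Q), op r • q = q * φ r)

/-- The image of `φ`, as a submodule of the right `R`-module `Q`. -/
def phiRange : Submodule Rᵐᵒᵖ Q where
  carrier := Set.range φ
  add_mem' := by rintro x y ⟨a, rfl⟩ ⟨b, rfl⟩; exact ⟨a + b, map_add φ a b⟩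
  zero_mem' := ⟨0, map_zero φ⟩
  smul_mem' := by
    rintro c x ⟨a, rfl⟩
    refine ⟨a * c.unop, ?_⟩
    rw [map_mul]
    conv_rhs => rw [← MulOpposite.op_unop c, hr]

/-- `K = Q/φ(R)` as a right `R`-module. -/
abbrev Kmod := Q ⧸ phiRange φ hr

end Kmod

section Kleft

variable {R Q : Type u} [Ring R] [Ring Q] (φ : R →+* Q) [Module Rᵐᵒᵖ Q]
  (hr : ∀ (r : R) (q : Q), op r • q = q * φ r)

/-- Left multiplication by `φ r` on `Q`, as an endomorphism of the right `R`-module `Q`. -/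
def lmulQ (r : R) : Q →ₗ[Rᵐᵒᵖ] Q where
  toFun q := φ r * q
  map_add' := mul_add _
  map_smul' := by
    intro c q
    simp only [RingHom.id_apply]
    conv_lhs => rw [← MulOpposite.op_unop c, hr]
    conv_rhs => rw [← MulOpposite.op_unop c, hr]
    rw [mul_assoc]

/-- Left multiplication by `φ r` on `K = Q/φ(R)`. -/
def lK (r : R) : Kmod φ hr →ₗ[Rᵐᵒᵖ] Kmod φ hr :=
  Submodule.mapQ _ _ (lmulQ φ hr r) (by
    rintro x ⟨a, rfl⟩
    exact ⟨r * a, by simp [lmulQ, map_mul]⟩)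

/-- The left `R`-module structure on `K = Q/φ(R)` induced by left multiplication. -/
def KleftModule : Module R (Kmod φ hr) :=
  letI : SMul R (Kmod φ hr) := ⟨fun r k => lK φ hr r k⟩
  Module.ofMinimalAxioms
    (fun r x y => map_add (lK φ hr r) x y)
    (fun r s x => by
      obtain ⟨q, rfl⟩ := Submodule.Quotient.mk_surjective _ x
      show lK φ hr (r + s) (Submodule.Quotient.mk q) = _
      simp only [lK, Submodule.mapQ_apply, lmulQ, LinearMap.coe_mk, AddHom.coe_mk, map_add,
        add_mul]
      rfl)
    (fun r s x => by
      obtain ⟨q, rfl⟩ := Submodule.Quotient.mk_surjective _ x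
      show lK φ hr (r * s) (Submodule.Quotient.mk q) = lK φ hr r (lK φ hr s _)
      simp only [lK, Submodule.mapQ_apply, lmulQ, LinearMap.coe_mk, AddHom.coe_mk, map_mul,
        mul_assoc])
    (fun x => by
      obtain ⟨q, rfl⟩ := Submodule.Quotient.mk_surjective _ x
      show lK φ hr 1 (Submodule.Quotient.mk q) = _
      simp [lK, Submodule.mapQ_apply, lmulQ])

end Kleft

section HomMod

variable {R Q : Type u} [Ring R] [Ring Q] (φ : R →+* Q) [Module Rᵐᵒᵖ Q]
  (hr : ∀ (r : R) (q : Q), op r • q = q * φ r)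
  (M : Type u) [AddCommGroup M] [Module Rᵐᵒᵖ M]

/-- The right `R`-module structure on `Hom_R(K, M)` coming from the left action of `R` on `K`. -/
def homModule : Module Rᵐᵒᵖ (Kmod φ hr →ₗ[Rᵐᵒᵖ] M) :=
  letI : SMul Rᵐᵒᵖ (Kmod φ hr →ₗ[Rᵐᵒᵖ] M) := ⟨fun c f => f.comp (lK φ hr c.unop)⟩
  Module.ofMinimalAxioms
    (fun c f g => by
      refine LinearMap.ext fun k => ?_
      rfl)
    (fun c d f => by
      show f.comp (lK φ hr (c + d).unop) = f.comp (lK φ hr c.unop) + f.comp (lK φ hr d.unop)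
      refine LinearMap.ext fun k => ?_
      obtain ⟨q, rfl⟩ := Submodule.Quotient.mk_surjective _ k
      simp [lK, Submodule.mapQ_apply, lmulQ, MulOpposite.unop_add, map_add, add_mul])
    (fun c d f => by
      show f.comp (lK φ hr (c * d).unop) = (f.comp (lK φ hr d.unop)).comp (lK φ hr c.unop)
      refine LinearMap.ext fun k => ?_
      obtain ⟨q, rfl⟩ := Submodule.Quotient.mk_surjective _ k
      simp [lK, Submodule.mapQ_apply, lmulQ, map_mul, mul_assoc])
    (fun f => by
      show f.comp (lK φ hr (1 : Rᵐᵒᵖ).unop) = f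
      refine LinearMap.ext fun k => ?_
      obtain ⟨q, rfl⟩ := Submodule.Quotient.mk_surjective _ k
      simp [lK, Submodule.mapQ_apply, lmulQ])

end HomMod

/-
`Hom_R(T, Hom_R(K, M))` is `Hom_R(T ⊗_R K, M)`, and `T ⊗_R K` is a quotient of `T ⊗_R Q`.
Concretely, a map `f : T → Hom_R(K, M)` gives the `R`-balanced map `(t, q) ↦ f t [q]` on
`T × Q`, which factors through `T ⊗_R Q = 0`.
-/

namespace NCTensor

variable {R : Type u} [Ring R] {M : Type u} [AddCommGroup M] [Module Rᵐᵒᵖ M]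
  {N : Type u} [AddCommGroup N] [Module R N] {A : Type*} [AddCommGroup A]

def lift (b : M → N → A) (hadd_left : ∀ m m' n, b (m + m') n = b m n + b m' n)
    (hadd_right : ∀ m n n', b m (n + n') = b m n + b m n')
    (hbal : ∀ (r : R) m n, b (op r • m) n = b m (r • n)) : NCTensor R M N →+ A :=
  QuotientAddGroup.lift (ncRels R M N) (FreeAbelianGroup.lift fun p => b p.1 p.2) <| by
    refine (AddSubgroup.closure_le _).2 ?_
    rintro x ((⟨m, m', n, rfl⟩ | ⟨m, n, n', rfl⟩) | ⟨r, m, n, rfl⟩) <;>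
      simp [hadd_left, hadd_right, hbal]

theorem lift_tmul (b : M → N → A) (hadd_left : ∀ m m' n, b (m + m') n = b m n + b m' n)
    (hadd_right : ∀ m n n', b m (n + n') = b m n + b m n')
    (hbal : ∀ (r : R) m n, b (op r • m) n = b m (r • n)) (m : M) (n : N) :
    lift b hadd_left hadd_right hbal (tmul R M N m n) = b m n :=
  FreeAbelianGroup.lift_apply_of (fun p : M × N => b p.1 p.2) (m, n)

theorem balanced_eq_zero_of_subsingleton [Subsingleton (NCTensor R M N)] (b : M → N → A)
    (hadd_left : ∀ m m' n, b (m + m') n = b m n + b m' n)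
    (hadd_right : ∀ m n n', b m (n + n') = b m n + b m n')
    (hbal : ∀ (r : R) m n, b (op r • m) n = b m (r • n)) (m : M) (n : N) : b m n = 0 := by
  rw [← lift_tmul b hadd_left hadd_right hbal, Subsingleton.elim (tmul R M N m n) 0, map_zero]

end NCTensor

section HomK

variable {R Q : Type u} [Ring R] [Ring Q] (φ : R →+* Q) [Module Rᵐᵒᵖ Q]
  (hr : ∀ (r : R) (q : Q), op r • q = q * φ r)

theorem lK_mk (r : R) (q : Q) :
    lK φ hr r (Submodule.Quotient.mk q) = Submodule.Quotient.mk (φ r * q) :=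
  rfl

theorem homModule_smul_apply {M : Type u} [AddCommGroup M] [Module Rᵐᵒᵖ M] (c : Rᵐᵒᵖ)
    (g : Kmod φ hr →ₗ[Rᵐᵒᵖ] M) (k : Kmod φ hr) :
    letI := homModule φ hr M
    (c • g) k = g (lK φ hr c.unop k) :=
  rfl

end HomK

theorem homK_torsionFree_general {R Q : Type u} [Ring R] [Ring Q] (φ : R →+* Q)
    [Module Rᵐᵒᵖ Q] (hr : ∀ (r : R) (q : Q), op r • q = q * φ r)
    [Module R Q] (hl : ∀ (r : R) (q : Q), r • q = φ r * q)
    (M : Type u) [AddCommGroup M] [Module Rᵐᵒᵖ M] :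
    letI : Module Rᵐᵒᵖ (Kmod φ hr →ₗ[Rᵐᵒᵖ] M) := homModule φ hr M
    ∀ (T : Type u) [AddCommGroup T] [Module Rᵐᵒᵖ T],
      Subsingleton (NCTensor R T Q) →
      ∀ f : T →ₗ[Rᵐᵒᵖ] (Kmod φ hr →ₗ[Rᵐᵒᵖ] M), f = 0 := by
  intro T _ _ _ f
  let := homModule φ hr M
  refine LinearMap.ext fun t => LinearMap.ext fun k => ?_
  obtain ⟨q, rfl⟩ := Submodule.Quotient.mk_surjective _ k
  refine NCTensor.balanced_eq_zero_of_subsingleton (R := R)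
    (fun t q => f t (Submodule.Quotient.mk q)) (fun _ _ _ => by simp)
    (fun _ _ _ => by simp [Submodule.Quotient.mk_add]) (fun r t q => ?_) t q
  rw [f.map_smul, homModule_smul_apply, unop_op, lK_mk, hl]

/-- If `φ : R → Q` is an injective ring epimorphism with `Tor_1^R(Q,Q) = 0` and
`K = Q/φ(R)`, then for every right `R`-module `M` the right `R`-module `Hom_R(K, M)`
is torsion-free: `Hom_R(T, Hom_R(K, M)) = 0` for every right `R`-module `T`
with `T ⊗_R Q = 0`. -/
theorem homK_torsionFree {R Q : Type u} [Ring R] [Ring Q] (φ : R →+* Q)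
    (hinj : Function.Injective φ) (hepi : IsRingEpi φ)
    [Module Rᵐᵒᵖ Q] (hr : ∀ (r : R) (q : Q), op r • q = q * φ r)
    [Module R Q] (hl : ∀ (r : R) (q : Q), r • q = φ r * q)
    (htor : Tor1Zero R Q Q)
    (M : Type u) [AddCommGroup M] [Module Rᵐᵒᵖ M] :
    letI : Module Rᵐᵒᵖ (Kmod φ hr →ₗ[Rᵐᵒᵖ] M) := homModule φ hr M
    ∀ (T : Type u) [AddCommGroup T] [Module Rᵐᵒᵖ T],
      Subsingleton (NCTensor R T Q) →
      ∀ f : T →ₗ[Rᵐᵒᵖ] (Kmod φ hr →ₗ[Rᵐᵒᵖ] M), f = 0 :=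
  homK_torsionFree_general φ hr hl M
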